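/- The one-state Turing machine M_cc does not halt on input u^n 0^m h whenever n < 2^m − 1: its head eventually reaches the blank region to the left of the input and moves left forever. -/

import Mathlib

inductive Dir : Type
  | L | R
deriving DecidableEq

def Dir.move : Dir → ℤ
  | .L => -1
  | .R => 1

/-- A one-state Turing machine: a blank symbol, a set of halting symbols
(as a Boolean predicate) and a transition function on the tape alphabet. -/
structure OneStateTM (Γ : Type) where
  blank : Γ
  halt : Γ → Bool
  δ : Γ → Γ × Dir

/-- A configuration: a bi-infinite tape and a head position. -/
structure Cfg (Γ : Type) where
  tape : ℤ → Γ
  pos : ℤ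

/-- One step of the machine; `none` means the machine has halted
(the head reads a halting symbol). -/
def OneStateTM.step {Γ : Type} (M : OneStateTM Γ) (c : Cfg Γ) : Option (Cfg Γ) :=
  if M.halt (c.tape c.pos) then none
  else some ⟨Function.update c.tape c.pos (M.δ (c.tape c.pos)).1,
             c.pos + (M.δ (c.tape c.pos)).2.move⟩

/-- Initial tape: the input written in cells 0,…,len−1, blanks elsewhere. -/
def OneStateTM.initTape {Γ : Type} (M : OneStateTM Γ) (l : List Γ) : ℤ → Γ :=
  fun i => if i < 0 then M.blank else l.getD i.toNat M.blank

/-- The machine halts starting from configuration `c`. -/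
def OneStateTM.HaltsFrom {Γ : Type} (M : OneStateTM Γ) (c : Cfg Γ) : Prop :=
  ∃ n : ℕ, (fun o => Option.bind o M.step)^[n] (some c) = none

/-- The machine halts on input `l` (head initially on the leftmost input symbol). -/
def OneStateTM.HaltsOn {Γ : Type} (M : OneStateTM Γ) (l : List Γ) : Prop :=
  M.HaltsFrom ⟨M.initTape l, 0⟩

/-- The tape alphabet of M_cc: blank, u, U, h, 0, 1, Z, C, B. -/
inductive Tcc : Type
  | blank | u | bigU | h | z0 | one | Z | C | B
deriving DecidableEq

/-- The one-state Turing machine M_cc. -/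
def Mcc : OneStateTM Tcc where
  blank := .blank
  halt := fun a => match a with | .h => true | _ => false
  δ := fun a => match a with
    | .u => (.bigU, .R)
    | .z0 => (.one, .L)
    | .bigU => (.C, .R)
    | .one => (.Z, .R)
    | .Z => (.z0, .L)
    | .C => (.B, .L)
    | .B => (.C, .R)
    | .blank => (.blank, .L)
    | .h => (.h, .R)   -- irrelevant: h is halting

/-- The input u^n 0^m h. -/
def ccInput (n m : ℕ) : List Tcc :=
  List.replicate n .u ++ List.replicate m .z0 ++ [.h]

/-!
`M_cc` runs a binary counter. It first sweeps right over `u^n`, turning it into `U^n`; the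
block `0^m` then holds a counter, least significant bit first. Each round increments the
counter (a carry is written as `Z` on the way right and turned back into `0` on the way
left), sweeps left over the `C`s turning them into `B`s, turns the nearest `U` into a `C`, and
sweeps right again turning the `B`s back into `C`s. After `b` rounds the tape reads
`⊔ U^(n-b) C^b [b] h` with the head on the counter. The head could only reach `h` through an
overflow of the counter, i.e. after `2^m - 1` increments; but round `n + 1`, after its
`(n + 1)`-st increment, finds the blank left of `C^n` and the machine moves left forever.
-/

open Function

namespace OneStateTM

variable {Γ : Type}

def Reaches (M : OneStateTM Γ) : Cfg Γ → Cfg Γ → Prop :=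
  Relation.ReflTransGen fun c c' => M.step c = some c'

variable {M : OneStateTM Γ}

theorem HaltsFrom.of_step {c c' : Cfg Γ} (h : M.step c = some c') (hc : M.HaltsFrom c) :
    M.HaltsFrom c' := by
  obtain ⟨_ | n, hn⟩ := hc
  · cases hn
  · exact ⟨n, by rwa [iterate_succ_apply, Option.bind_some, h] at hn⟩

theorem HaltsFrom.of_reaches {c c' : Cfg Γ} (h : M.Reaches c c') (hc : M.HaltsFrom c) :
    M.HaltsFrom c' := by
  induction h with
  | refl => exact hc
  | tail _ hstep ih => exact ih.of_step hstep

theorem step_of_read {t : ℤ → Γ} {p : ℤ} {s s' : Γ} {d : Dir} (hs : t p = s)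
    (hh : M.halt s = false) (hδ : M.δ s = (s', d)) :
    M.step ⟨t, p⟩ = some ⟨update t p s', p + d.move⟩ := by
  simp [step, hs, hh, hδ]

theorem reaches_of_read {t : ℤ → Γ} {p q : ℤ} {s s' : Γ} {d : Dir} (hs : t p = s)
    (hh : M.halt s = false) (hδ : M.δ s = (s', d)) (hq : p + d.move = q) :
    M.Reaches ⟨t, p⟩ ⟨update t p s', q⟩ :=
  .single (hq ▸ step_of_read hs hh hδ)

theorem not_haltsFrom_of_blank_le (hh : M.halt M.blank = false)
    (hδ : M.δ M.blank = (M.blank, .L)) {t : ℤ → Γ} {p : ℤ} (ht : ∀ i ≤ p, t i = M.blank) :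
    ¬ M.HaltsFrom ⟨t, p⟩ := by
  rintro ⟨n, hn⟩
  induction n generalizing p with
  | zero => cases hn
  | succ n ih =>
    have hstep := step_of_read (ht p le_rfl) hh hδ
    rw [update_eq_self_iff.mpr (ht p le_rfl).symm] at hstep
    rw [iterate_succ_apply, Option.bind_some, hstep] at hn
    exact ih (fun i hi => ht i (by simp only [Dir.move] at hi; omega)) hn

theorem reaches_sweep_right {s s' : Γ} (hh : M.halt s = false) (hδ : M.δ s = (s', .R))
    (a : ℕ) {t : ℤ → Γ} {p : ℤ} (ht : ∀ i, p ≤ i → i < p + a → t i = s) :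
    ∃ t', M.Reaches ⟨t, p⟩ ⟨t', p + a⟩ ∧ (∀ i, p ≤ i → i < p + a → t' i = s') ∧
      ∀ i, i < p ∨ p + a ≤ i → t' i = t i := by
  induction a generalizing t p with
  | zero => exact ⟨t, by simpa using .refl, by omega, fun _ _ => rfl⟩
  | succ a ih =>
    obtain ⟨t', hr, hs', hframe⟩ := ih (t := update t p s') (p := p + 1)
      fun i h₁ h₂ => by rw [update_of_ne (by omega)]; exact ht i (by omega) (by omega)
    rw [show p + ((a + 1 : ℕ) : ℤ) = p + 1 + a by push_cast; ring]
    refine ⟨t', (reaches_of_read (ht p le_rfl (by omega)) hh hδ rfl).trans hr,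
      fun i h₁ h₂ => ?_, fun i hi => ?_⟩
    · rcases h₁.eq_or_lt with rfl | h₁
      · rw [hframe p (by omega), update_self]
      · exact hs' i (by omega) (by omega)
    · rw [hframe i (by omega), update_of_ne (by omega)]

theorem reaches_sweep_left {s s' : Γ} (hh : M.halt s = false) (hδ : M.δ s = (s', .L))
    (a : ℕ) {t : ℤ → Γ} {p : ℤ} (ht : ∀ i, p - a < i → i ≤ p → t i = s) :
    ∃ t', M.Reaches ⟨t, p⟩ ⟨t', p - a⟩ ∧ (∀ i, p - a < i → i ≤ p → t' i = s') ∧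
      ∀ i, i ≤ p - a ∨ p < i → t' i = t i := by
  induction a generalizing t p with
  | zero => exact ⟨t, by simpa using .refl, by omega, fun _ _ => rfl⟩
  | succ a ih =>
    obtain ⟨t', hr, hs', hframe⟩ := ih (t := update t p s') (p := p - 1)
      fun i h₁ h₂ => by rw [update_of_ne (by omega)]; exact ht i (by omega) (by omega)
    rw [show p - ((a + 1 : ℕ) : ℤ) = p - 1 - a by push_cast; ring]
    refine ⟨t', (reaches_of_read (ht p (by omega) le_rfl) hh hδ (sub_eq_add_neg p 1).symm).trans hr,
      fun i h₁ h₂ => ?_, fun i hi => ?_⟩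
    · rcases h₂.eq_or_lt with rfl | h₂
      · rw [hframe i (by omega), update_self]
      · exact hs' i (by omega) (by omega)
    · rw [hframe i (by omega), update_of_ne (by omega)]

theorem initTape_of_neg (l : List Γ) {i : ℤ} (hi : i < 0) : M.initTape l i = M.blank :=
  if_pos hi

theorem initTape_natCast (l : List Γ) (i : ℕ) : M.initTape l i = l.getD i M.blank := by
  simp [initTape]

end OneStateTM

namespace Mcc

open OneStateTM

def bitSym : Bool → Tcc
  | true => .one
  | false => .z0

def CounterAt (t : ℤ → Tcc) (p : ℤ) (m v : ℕ) : Prop :=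
  ∀ j < m, t (p + j) = bitSym (v.testBit j)

theorem counterAt_succ_iff {t : ℤ → Tcc} {p : ℤ} {m v : ℕ} :
    CounterAt t p (m + 1) v ↔ t p = bitSym (v.testBit 0) ∧ CounterAt t (p + 1) m (v / 2) := by
  refine Nat.forall_lt_succ_left.trans (and_congr (by simp) (forall₂_congr fun j _ => ?_))
  rw [Nat.testBit_div_two]
  push_cast
  ring_nf

theorem CounterAt.congr {t t' : ℤ → Tcc} {p : ℤ} {m v : ℕ} (h : CounterAt t p m v)
    (ht : ∀ i, p ≤ i → i < p + m → t' i = t i) : CounterAt t' p m v :=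
  fun j hj => (ht _ (by omega) (by omega)).trans (h j hj)

theorem CounterAt.reaches_succ {m : ℕ} : ∀ {v : ℕ} {t : ℤ → Tcc} {p : ℤ},
    CounterAt t p m v → v + 1 < 2 ^ m →
    ∃ t', Mcc.Reaches ⟨t, p⟩ ⟨t', p - 1⟩ ∧ CounterAt t' p m (v + 1) ∧
      ∀ i, i < p ∨ p + m ≤ i → t' i = t i := by
  induction m with
  | zero => intro v _ _ _ hv; simp at hv
  | succ m ih =>
    intro v t p h hv
    obtain ⟨h₀, hrest⟩ := counterAt_succ_iff.mp h
    have hL : p + Dir.L.move = p - 1 := (sub_eq_add_neg p 1).symm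
    cases hbit : v.testBit 0
    · have hbit' : (v + 1).testBit 0 = true ∧ (v + 1) / 2 = v / 2 := by
        simp only [Nat.testBit_zero, decide_eq_true_eq, decide_eq_false_iff_not] at hbit ⊢
        omega
      refine ⟨update t p .one, reaches_of_read (hbit ▸ h₀) rfl rfl hL, ?_,
        fun i hi => update_of_ne (by omega) _ _⟩
      refine counterAt_succ_iff.mpr ⟨by rw [update_self, hbit'.1]; rfl, ?_⟩
      rw [hbit'.2]
      exact hrest.congr fun i h₁ _ => update_of_ne (by omega) _ _
    · -- carry: the `1` is parked as `Z` while the rest of the counter is incremented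
      have hbit' : (v + 1).testBit 0 = false ∧ (v + 1) / 2 = v / 2 + 1 := by
        simp only [Nat.testBit_zero, decide_eq_true_eq, decide_eq_false_iff_not] at hbit ⊢
        omega
      obtain ⟨t', hr, hcnt, hframe⟩ := ih (v := v / 2) (t := update t p .Z) (p := p + 1)
        (hrest.congr fun i h₁ _ => update_of_ne (by omega) _ _) (by rw [pow_succ] at hv; omega)
      have hZ : t' p = .Z := by rw [hframe p (by omega), update_self]
      refine ⟨update t' p .z0,
        ((reaches_of_read (q := p + 1) (hbit ▸ h₀) rfl rfl rfl).trans
          (by rwa [add_sub_cancel_right] at hr)).trans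
          (reaches_of_read hZ rfl rfl hL), ?_, fun i hi => ?_⟩
      · refine counterAt_succ_iff.mpr ⟨by rw [update_self, hbit'.1]; rfl, ?_⟩
        rw [hbit'.2]
        exact hcnt.congr fun i h₁ _ => update_of_ne (by omega) _ _
      · rw [update_of_ne (by omega), hframe i (by omega), update_of_ne (by omega)]

structure CountingCfg (m a b : ℕ) (t : ℤ → Tcc) (p : ℤ) : Prop where
  blank_of_lt : ∀ i < p - a - b, t i = .blank
  bigU : ∀ i, p - a - b ≤ i → i < p - b → t i = .bigU
  C : ∀ i, p - b ≤ i → i < p → t i = .C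
  counter : CounterAt t p m b

theorem CountingCfg.reaches_sweep_back {m a b : ℕ} {t : ℤ → Tcc} {p : ℤ}
    (h : CountingCfg m a b t p) (hb : b + 1 < 2 ^ m) :
    ∃ t', Mcc.Reaches ⟨t, p⟩ ⟨t', p - 1 - b⟩ ∧ (∀ i ≤ p - 1 - b, t' i = t i) ∧
      (∀ i, p - 1 - b < i → i < p → t' i = .B) ∧ CounterAt t' p m (b + 1) := by
  obtain ⟨t₁, hr₁, hcnt₁, hframe₁⟩ := h.counter.reaches_succ hb
  obtain ⟨t₂, hr₂, hB₂, hframe₂⟩ := reaches_sweep_left (M := Mcc) (s := .C) rfl rfl b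
    (t := t₁) (p := p - 1) fun i h₁ h₂ => (hframe₁ i (by omega)).trans (h.C i (by omega) (by omega))
  refine ⟨t₂, hr₁.trans hr₂, fun i hi => ?_, fun i h₁ h₂ => hB₂ i h₁ (by omega),
    hcnt₁.congr fun i h₁ _ => hframe₂ i (by omega)⟩
  rw [hframe₂ i (by omega), hframe₁ i (by omega)]

theorem CountingCfg.not_haltsFrom_of_zero {m b : ℕ} {t : ℤ → Tcc} {p : ℤ}
    (h : CountingCfg m 0 b t p) (hb : b + 1 < 2 ^ m) : ¬ Mcc.HaltsFrom ⟨t, p⟩ := by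
  obtain ⟨t', hr, hleft, -, -⟩ := h.reaches_sweep_back hb
  exact fun hhalt => not_haltsFrom_of_blank_le rfl rfl
    (fun i hi => (hleft i hi).trans (h.blank_of_lt i (by omega))) (hhalt.of_reaches hr)

theorem CountingCfg.reaches_next {m a b : ℕ} {t : ℤ → Tcc} {p : ℤ}
    (h : CountingCfg m (a + 1) b t p) (hb : b + 1 < 2 ^ m) :
    ∃ t', Mcc.Reaches ⟨t, p⟩ ⟨t', p⟩ ∧ CountingCfg m a (b + 1) t' p := by
  obtain ⟨t₂, hr₂, hleft, hB, hcnt⟩ := h.reaches_sweep_back hb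
  have hU : t₂ (p - 1 - b) = .bigU := (hleft _ le_rfl).trans (h.bigU _ (by omega) (by omega))
  obtain ⟨t₃, hr₃, hC₃, hframe₃⟩ := reaches_sweep_right (M := Mcc) (s := .B) rfl rfl b
    (t := update t₂ (p - 1 - b) .C) (p := p - b)
    fun i h₁ h₂ => (update_of_ne (by omega) _ _).trans (hB i (by omega) (by omega))
  have hstep := reaches_of_read (M := Mcc) hU rfl rfl (q := p - b) (by simp only [Dir.move]; ring)
  refine ⟨t₃, hr₂.trans (hstep.trans (by rwa [sub_add_cancel] at hr₃)), ?_⟩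
  have hleft₃ : ∀ i < p - 1 - b, t₃ i = t i := fun i hi => by
    rw [hframe₃ i (by omega), update_of_ne (by omega), hleft i (by omega)]
  refine ⟨fun i hi => ?_, fun i h₁ h₂ => ?_, fun i h₁ h₂ => ?_, hcnt.congr fun i h₁ _ => ?_⟩
  · rw [hleft₃ i (by omega)]; exact h.blank_of_lt i (by omega)
  · rw [hleft₃ i (by omega)]; exact h.bigU i (by omega) (by omega)
  · rcases h₁.eq_or_lt with rfl | h₁
    · rw [hframe₃ _ (by omega), show p - ((b + 1 : ℕ) : ℤ) = p - 1 - b by push_cast; ring,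
        update_self]
    · exact hC₃ i (by omega) (by omega)
  · rw [hframe₃ i (by omega), update_of_ne (by omega)]

theorem CountingCfg.not_haltsFrom {m : ℕ} :
    ∀ {a b : ℕ} {t : ℤ → Tcc} {p : ℤ}, CountingCfg m a b t p → a + b + 1 < 2 ^ m →
      ¬ Mcc.HaltsFrom ⟨t, p⟩
  | 0, _, _, _, h, hab => h.not_haltsFrom_of_zero (by simpa using hab)
  | _ + 1, _, _, _, h, hab => by
    obtain ⟨t', hr, h'⟩ := h.reaches_next (by omega)
    exact fun hhalt => h'.not_haltsFrom (by omega) (hhalt.of_reaches hr)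

theorem reaches_countingCfg_ccInput (n m : ℕ) :
    ∃ t, Mcc.Reaches ⟨Mcc.initTape (ccInput n m), 0⟩ ⟨t, n⟩ ∧ CountingCfg m n 0 t n := by
  obtain ⟨t, hr, hU, hframe⟩ := reaches_sweep_right (M := Mcc) (s := .u) rfl rfl n
    (t := Mcc.initTape (ccInput n m)) (p := 0) fun i h₁ h₂ => by
      lift i to ℕ using h₁
      simp [initTape_natCast, ccInput, List.getD_eq_getElem?_getD, List.getElem?_append,
        show i < n by omega]
  refine ⟨t, by simpa using hr, ⟨fun i hi => ?_, fun i h₁ h₂ => hU i (by omega) (by omega),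
    fun i h₁ h₂ => by omega, fun j hj => ?_⟩⟩
  · rw [hframe i (by omega)]; exact initTape_of_neg _ (by omega)
  · rw [hframe _ (by omega), Nat.zero_testBit, ← Nat.cast_add, initTape_natCast]
    simp [ccInput, List.getD_eq_getElem?_getD, List.getElem?_append, hj, bitSym]

end Mcc

/-- M_cc does not halt on input u^n 0^m h whenever n < 2^m − 1. -/
theorem Mcc_not_halts_of_lt : ∀ n m : ℕ, n < 2 ^ m - 1 → ¬ Mcc.HaltsOn (ccInput n m) := by
  intro n m hnm hhalt
  obtain ⟨t, hr, hcfg⟩ := Mcc.reaches_countingCfg_ccInput n m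
  exact hcfg.not_haltsFrom (by omega) (hhalt.of_reaches hr)
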